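/- The supremum over x > 0 of Φ(x) - x²/(1 + x²) is strictly less than 0.5410, where Φ is the standard normal distribution function. -/

import Mathlib

noncomputable def Phi (x : ℝ) : ℝ :=
  (Real.sqrt (2 * Real.pi))⁻¹ * ∫ t in Set.Iio x, Real.exp (-t ^ 2 / 2)

/-!
For `x ≥ 0.93` the bound is crude: `Φ x ≤ 1` while `x² / (1 + x²) ≥ 0.8649 / 1.8649 > 0.46`.
For `0 < x ≤ 0.93` write `Φ x = 1/2 + (2π)^{-1/2} ∫₀ˣ e^{-t²/2} dt` and bound the integrand by its
Taylor polynomial `1 - t²/2 + t⁴/8` plus the remainder bound `t⁶/36` of `Real.exp_bound`; what is left is a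
polynomial inequality on `[0, 0.93]`. The maximum of `Φ x - x² / (1 + x²)` is `0.54094…`, attained
near `x ≈ 0.21`, so the constants leave little room.
-/

open MeasureTheory Real Set

lemma integrable_exp_neg_sq_div_two : Integrable fun t : ℝ => exp (-t ^ 2 / 2) := by
  convert integrable_exp_neg_mul_sq (show (0 : ℝ) < 1 / 2 by norm_num) using 2 with t
  ring_nf

lemma integral_exp_neg_sq_div_two : ∫ t : ℝ, exp (-t ^ 2 / 2) = √(2 * π) := by
  convert integral_gaussian (1 / 2) using 2 with t
  · ring_nf
  · ring_nf

lemma integral_Iic_zero_exp_neg_sq_div_two :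
    ∫ t in Iic (0 : ℝ), exp (-t ^ 2 / 2) = √(2 * π) / 2 := by
  have h_symm : ∫ t in Iic (0 : ℝ), exp (-t ^ 2 / 2) = ∫ t in Ioi (0 : ℝ), exp (-t ^ 2 / 2) := by
    rw [← neg_zero, ← integral_comp_neg_Iic]
    simp
  rw [h_symm]
  convert integral_gaussian_Ioi (1 / 2) using 2 with t
  · ring_nf
  · ring_nf

lemma sqrt_two_pi_pos : 0 < √(2 * π) := by positivity

lemma Phi_le_one (x : ℝ) : Phi x ≤ 1 := by
  have h : ∫ t in Iio x, exp (-t ^ 2 / 2) ≤ √(2 * π) :=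
    integral_exp_neg_sq_div_two ▸ setIntegral_le_integral integrable_exp_neg_sq_div_two
      (.of_forall fun t => (exp_pos _).le)
  calc Phi x ≤ (√(2 * π))⁻¹ * √(2 * π) := by unfold Phi; gcongr
    _ = 1 := inv_mul_cancel₀ sqrt_two_pi_pos.ne'

lemma Phi_eq_half_add (x : ℝ) :
    Phi x = 1 / 2 + (√(2 * π))⁻¹ * ∫ t in (0 : ℝ)..x, exp (-t ^ 2 / 2) := by
  have h_split := intervalIntegral.integral_Iic_sub_Iic
    (integrable_exp_neg_sq_div_two.integrableOn (s := Iic 0))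
    (integrable_exp_neg_sq_div_two.integrableOn (s := Iic x))
  rw [integral_Iic_zero_exp_neg_sq_div_two] at h_split
  rw [Phi, setIntegral_congr_set Iio_ae_eq_Iic, ← h_split, mul_sub,
    mul_div_assoc', inv_mul_cancel₀ sqrt_two_pi_pos.ne']
  ring

lemma exp_le_of_abs_le_one {u : ℝ} (hu : |u| ≤ 1) :
    exp u ≤ 1 + u + u ^ 2 / 2 + 2 / 9 * |u| ^ 3 := by
  have h := (abs_sub_le_iff.1 (exp_bound hu (n := 3) (by norm_num))).1
  norm_num [Finset.sum_range_succ, Nat.factorial] at h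
  linarith

lemma exp_neg_sq_div_two_le {t : ℝ} (ht : t ^ 2 ≤ 2) :
    exp (-t ^ 2 / 2) ≤ 1 - t ^ 2 / 2 + t ^ 4 / 8 + t ^ 6 / 36 := by
  have h_abs : |-t ^ 2 / 2| = t ^ 2 / 2 := by
    rw [abs_of_nonpos (by nlinarith)]; ring
  have h := exp_le_of_abs_le_one (u := -t ^ 2 / 2) (by rw [h_abs]; linarith)
  rw [h_abs] at h
  linarith

lemma integral_exp_neg_sq_div_two_le {x : ℝ} (hx : 0 ≤ x) (hx2 : x ^ 2 ≤ 2) :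
    ∫ t in (0 : ℝ)..x, exp (-t ^ 2 / 2) ≤ x - x ^ 3 / 6 + x ^ 5 / 40 + x ^ 7 / 252 := by
  have h_deriv : ∀ t ∈ uIcc 0 x,
      HasDerivAt (fun s : ℝ => s - s ^ 3 / 6 + s ^ 5 / 40 + s ^ 7 / 252)
        (1 - t ^ 2 / 2 + t ^ 4 / 8 + t ^ 6 / 36) t := by
    intro t _
    exact ((((hasDerivAt_id' t).sub ((hasDerivAt_pow 3 t).div_const 6)).add
      ((hasDerivAt_pow 5 t).div_const 40)).add ((hasDerivAt_pow 7 t).div_const 252)).congr_deriv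
      (by push_cast; ring)
  have h_poly : ∫ t in (0 : ℝ)..x, (1 - t ^ 2 / 2 + t ^ 4 / 8 + t ^ 6 / 36)
      = x - x ^ 3 / 6 + x ^ 5 / 40 + x ^ 7 / 252 := by
    rw [intervalIntegral.integral_eq_sub_of_hasDerivAt h_deriv
      (Continuous.intervalIntegrable (by fun_prop) _ _)]
    ring
  rw [← h_poly]
  refine intervalIntegral.integral_mono_on hx
    (Continuous.intervalIntegrable (by fun_prop) _ _)
    (Continuous.intervalIntegrable (by fun_prop) _ _) fun t ht => ?_
  exact exp_neg_sq_div_two_le (by nlinarith [ht.1, ht.2])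

lemma sqrt_two_pi_ge : (2.5066 : ℝ) ≤ √(2 * π) :=
  le_sqrt_of_sq_le (by nlinarith [pi_gt_d6])

lemma Phi_le_half_add_poly {x : ℝ} (hx : 0 ≤ x) (hx2 : x ^ 2 ≤ 2) :
    Phi x ≤ 1 / 2 + (x - x ^ 3 / 6 + x ^ 5 / 40 + x ^ 7 / 252) / 2.5066 := by
  have h_poly_nonneg : 0 ≤ x - x ^ 3 / 6 + x ^ 5 / 40 + x ^ 7 / 252 := by
    nlinarith [pow_nonneg hx 5, pow_nonneg hx 7, mul_nonneg hx (sub_nonneg.2 hx2)]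
  calc Phi x ≤ 1 / 2 + (√(2 * π))⁻¹ * (x - x ^ 3 / 6 + x ^ 5 / 40 + x ^ 7 / 252) := by
        rw [Phi_eq_half_add]
        gcongr
        exact integral_exp_neg_sq_div_two_le hx hx2
    _ ≤ 1 / 2 + (x - x ^ 3 / 6 + x ^ 5 / 40 + x ^ 7 / 252) / 2.5066 := by
        rw [inv_mul_eq_div]
        gcongr
        exact sqrt_two_pi_ge

-- `0.21343` is close to the maximiser, where the inequality is nearly tight.
lemma poly_div_sub_sq_div_le {x : ℝ} (hx : 0 < x) (hx' : x ≤ 0.93) :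
    (x - x ^ 3 / 6 + x ^ 5 / 40 + x ^ 7 / 252) / 2.5066 - x ^ 2 / (1 + x ^ 2) ≤ 0.04099 := by
  have h_sq : x ^ 2 ≤ 0.8649 := by nlinarith
  have h_higher : 0 ≤ x ^ 5 * (17 / 120 - 73 / 2520 * x ^ 2 - x ^ 4 / 252) :=
    mul_nonneg (pow_nonneg hx.le 5) (by nlinarith)
  have h_max : 0 ≤ (x - 0.21343) ^ 2 * (0.93 - x) :=
    mul_nonneg (sq_nonneg _) (by linarith)
  rw [div_sub_div _ _ (by norm_num) (by positivity), div_le_iff₀ (by positivity)]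
  nlinarith [sq_nonneg (x - 0.21343)]

lemma Phi_sub_le_of_le {x : ℝ} (hx : 0 < x) (hx' : x ≤ 0.93) :
    Phi x - x ^ 2 / (1 + x ^ 2) ≤ 0.54099 := by
  have h_Phi := Phi_le_half_add_poly hx.le (by nlinarith)
  linarith [poly_div_sub_sq_div_le hx hx']

lemma Phi_sub_le_of_ge {x : ℝ} (hx : 0.93 ≤ x) :
    Phi x - x ^ 2 / (1 + x ^ 2) ≤ 0.54 := by
  have h_frac : x ^ 2 / (1 + x ^ 2) = 1 - 1 / (1 + x ^ 2) := by
    field_simp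
    ring
  have h_recip : 1 / (1 + x ^ 2) ≤ 1 / 1.8649 := by
    gcongr
    nlinarith
  rw [h_frac]
  norm_num at h_recip ⊢
  linarith [Phi_le_one x]

theorem stmt_15 :
    sSup {y : ℝ | ∃ x > 0, y = Phi x - x ^ 2 / (1 + x ^ 2)} < 0.5410 := by
  refine lt_of_le_of_lt (b := 0.54099) (Real.sSup_le ?_ (by norm_num)) (by norm_num)
  rintro y ⟨x, hx, rfl⟩
  rcases le_or_gt x 0.93 with hx_small | hx_large
  · exact Phi_sub_le_of_le hx hx_small
  · linarith [Phi_sub_le_of_ge hx_large.le]
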